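/- Let n ≥ 3 and 1 ≤ α ≤ √2, ᾱ = √(2-α²). Then the center density δ(Dₙ^α) = 1/(2^(n/2) α^(n-3)(α³+ᾱ³)) satisfies 1/2ⁿ ≤ δ(Dₙ^α) ≤ 1/2^(n/2+1), with the upper bound attained at α = 1 and the lower bound at α = √2; moreover α ↦ δ(Dₙ^α) is strictly decreasing on [1,√2]. -/

import Mathlib

/-!
With ᾱ = √(2 - α²), the denominator 2^(n/2) α^(n-3) (α³ + ᾱ³) is strictly increasing on [1, √2]:
α^(n-3) is nondecreasing, and (α³ + ᾱ³)' = 3α(α - ᾱ) > 0 because α > 1 > ᾱ in the interior.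
Hence δ is strictly decreasing there, and the two bounds are its values at the endpoints,
where ᾱ = 1 and ᾱ = 0 respectively.
-/

open Set Real

noncomputable def cubeSum (α : ℝ) : ℝ := α ^ 3 + (2 - α ^ 2) ^ ((3 : ℝ) / 2)

lemma hasDerivAt_cubeSum (x : ℝ) :
    HasDerivAt cubeSum (3 * x * (x - √(2 - x ^ 2))) x := by
  have hsq : HasDerivAt (fun y : ℝ => 2 - y ^ 2) (-(2 * x)) x := by
    simpa using (hasDerivAt_pow 2 x).const_sub 2
  refine ((hasDerivAt_pow 3 x).add
    (hsq.rpow_const (p := 3 / 2) (Or.inr (by norm_num)))).congr_deriv ?_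
  rw [sqrt_eq_rpow]
  norm_num
  ring

lemma cubeSum_pos {α : ℝ} (hα : 0 < α) (hα2 : α ^ 2 ≤ 2) : 0 < cubeSum α :=
  add_pos_of_pos_of_nonneg (pow_pos hα 3) (rpow_nonneg (sub_nonneg.2 hα2) _)

lemma strictMonoOn_cubeSum : StrictMonoOn cubeSum (Icc 1 √2) := by
  refine strictMonoOn_of_deriv_pos (convex_Icc _ _)
    (fun x _ => (hasDerivAt_cubeSum x).continuousAt.continuousWithinAt) fun x hx => ?_
  rw [interior_Icc] at hx
  obtain ⟨hx1, hx2⟩ := hx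
  have hx0 : 0 < x := one_pos.trans hx1
  have hsqrt : √(2 - x ^ 2) < x := (sqrt_lt' hx0).2 (by nlinarith)
  rw [(hasDerivAt_cubeSum x).deriv]
  have hgap := sub_pos.2 hsqrt
  positivity

lemma cubeSum_one : cubeSum 1 = 2 := by norm_num [cubeSum]

lemma cubeSum_sqrt_two : cubeSum √2 = √2 ^ 3 := by norm_num [cubeSum]

lemma strictAntiOn_one_div_mul_pow_mul_cubeSum {c : ℝ} (hc : 0 < c) (k : ℕ) :
    StrictAntiOn (fun α => 1 / (c * α ^ k * cubeSum α)) (Icc 1 √2) := by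
  have hpos : ∀ α ∈ Icc 1 √2, 0 < α ∧ 0 < cubeSum α := fun α ⟨h1, h2⟩ => by
    have hα : 0 < α := one_pos.trans_le h1
    refine ⟨hα, cubeSum_pos hα ?_⟩
    simpa using pow_le_pow_left₀ hα.le h2 2
  refine one_div_strictAntiOn.comp_strictMonoOn (fun a ha b hb hab => ?_) fun α hα => ?_
  · refine mul_lt_mul_of_le_of_lt_of_nonneg_of_pos ?_ (strictMonoOn_cubeSum ha hb hab)
      (hpos a ha).2.le (mul_pos hc (pow_pos (hpos b hb).1 k))
    gcongr
    exact (hpos a ha).1.le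
  · obtain ⟨hα0, hcube⟩ := hpos α hα
    show 0 < c * α ^ k * cubeSum α
    positivity

theorem stmt_14 (n : ℕ) (hn : 3 ≤ n) (δ : ℝ → ℝ)
    (hδ : ∀ α : ℝ, δ α =
      1 / (2 ^ ((n : ℝ) / 2) * α ^ (n - 3) * (α ^ 3 + (2 - α ^ 2) ^ ((3 : ℝ) / 2)))) :
    (∀ α ∈ Set.Icc (1 : ℝ) (Real.sqrt 2), 1 / 2 ^ n ≤ δ α ∧ δ α ≤ 1 / 2 ^ ((n : ℝ) / 2 + 1)) ∧
      δ 1 = 1 / 2 ^ ((n : ℝ) / 2 + 1) ∧ δ (Real.sqrt 2) = 1 / 2 ^ n ∧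
      StrictAntiOn δ (Set.Icc 1 (Real.sqrt 2)) := by
  have hδ' : ∀ α, δ α = 1 / (2 ^ ((n : ℝ) / 2) * α ^ (n - 3) * cubeSum α) := hδ
  have hanti : StrictAntiOn δ (Icc 1 √2) :=
    funext hδ' ▸ strictAntiOn_one_div_mul_pow_mul_cubeSum (rpow_pos_of_pos two_pos _) (n - 3)
  have hδ1 : δ 1 = 1 / 2 ^ ((n : ℝ) / 2 + 1) := by
    rw [hδ', rpow_add_one two_ne_zero, one_pow, mul_one, cubeSum_one]
  have hδsqrt : δ √2 = 1 / 2 ^ n := by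
    rw [hδ', cubeSum_sqrt_two, mul_assoc, pow_sub_mul_pow _ hn, rpow_div_two_eq_sqrt _ zero_le_two,
      rpow_natCast, ← mul_pow, mul_self_sqrt zero_le_two]
  have hs1 : (1 : ℝ) ≤ √2 := one_le_sqrt.2 one_le_two
  refine ⟨fun α hα => ⟨?_, ?_⟩, hδ1, hδsqrt, hanti⟩
  · exact hδsqrt ▸ hanti.antitoneOn hα ⟨hs1, le_rfl⟩ hα.2
  · exact hδ1 ▸ hanti.antitoneOn ⟨le_rfl, hs1⟩ hα hα.1
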